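/- For all sufficiently large n, cn_ℓ(𝔅ℭ, G_{P(1,2;n)}) ≤ 3 · log_{8/7} n; consequently cn_ℓ(𝔅ℭ, G_{P(1,2;n)}) = Θ(log n) as n → ∞. -/

import Mathlib

open SimpleGraph

/-- A graph is complete bipartite if its vertex set splits into two disjoint
parts `A, B` and its edges are exactly all pairs between `A` and `B`. -/
def IsCompleteBipartite {W : Type*} (G : SimpleGraph W) : Prop :=
  ∃ A B : Set W, Disjoint A B ∧ A ∪ B = Set.univ ∧
    ∀ u v : W, G.Adj u v ↔ ((u ∈ A ∧ v ∈ B) ∨ (u ∈ B ∧ v ∈ A))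

/-- A difference graph: a bipartite graph (with parts `A, B`) in which the
neighbourhoods of the vertices of `A` are linearly ordered by inclusion
(equivalently, the vertices of `A` can be ordered `a₁, …, a_r` with
`N(aᵢ) ⊆ N(a_{i-1})`). -/
def IsDifferenceGraph {W : Type*} (G : SimpleGraph W) : Prop :=
  ∃ A B : Set W, Disjoint A B ∧ A ∪ B = Set.univ ∧
    (∀ u v : W, G.Adj u v → ((u ∈ A ∧ v ∈ B) ∨ (u ∈ B ∧ v ∈ A))) ∧
    ∀ a ∈ A, ∀ a' ∈ A,
      G.neighborSet a ⊆ G.neighborSet a' ∨ G.neighborSet a' ⊆ G.neighborSet a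

open scoped Classical in
/-- The local covering number of `H` with respect to the class of subgraphs
satisfying `P`: the least `k` such that there is a set `C` of subgraphs of `H`,
each in the class, whose union is `H`, and such that every vertex of `H` lies
in at most `k` members of `C`. -/
noncomputable def localCoverNumber {V : Type*} (H : SimpleGraph V)
    (P : H.Subgraph → Prop) : ℕ :=
  sInf {k | ∃ C : Finset H.Subgraph, (∀ G ∈ C, P G) ∧ C.sup id = ⊤ ∧
    ∀ v : V, (C.filter fun G => v ∈ G.verts).card ≤ k}

/-- The local complete-bipartite covering number `cn_ℓ(𝔅ℭ, H)`. -/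
noncomputable def cbCN {V : Type*} (H : SimpleGraph V) : ℕ :=
  localCoverNumber H fun G => IsCompleteBipartite G.coe

/-- The local difference-graph covering number `cn_ℓ(𝔇, H)`. -/
noncomputable def diffCN {V : Type*} (H : SimpleGraph V) : ℕ :=
  localCoverNumber H fun G => IsDifferenceGraph G.coe

/-- Vertices of `G_{P(1,2;n)}`: singletons and 2-element subsets of `{1,…,n}`. -/
abbrev P12 (n : ℕ) := {A : Finset (Fin n) // A.card = 1 ∨ A.card = 2}

/-- The bipartite graph `G_{P(1,2;n)}`: a singleton `{a}` is adjacent to a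
pair `{b,c}` iff `a ∉ {b,c}`. -/
def G12 (n : ℕ) : SimpleGraph (P12 n) where
  Adj x y := (x.1.card = 1 ∧ y.1.card = 2 ∧ ¬x.1 ⊆ y.1) ∨
             (y.1.card = 1 ∧ x.1.card = 2 ∧ ¬y.1 ⊆ x.1)
  symm := by constructor; intro x y h; tauto
  loopless := by constructor; intro x h; rcases h with ⟨h1, h2, _⟩ | ⟨h1, h2, _⟩ <;> omega


-- ==== auxiliary development ====

open Finset

attribute [local instance] Classical.propDecidable

namespace UB

variable {n : ℕ}

def Tmem (j w : ℕ) (x : P12 n) : Prop :=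
  x.1.card = 1 ∧ ∀ a ∈ x.1, (a : Fin n).val / 2 ^ j = w

def Pmem (j w : ℕ) (x : P12 n) : Prop :=
  x.1.card = 2 ∧ (∀ a ∈ x.1, (a : Fin n).val / 2 ^ j ≠ w) ∧
    (∃ a ∈ x.1, (a : Fin n).val / 2 ^ j / 2 = w / 2)

lemma not_T_and_P {j w : ℕ} {x : P12 n} (hT : Tmem j w x) (hP : Pmem j w x) : False := by
  have := hT.1; have := hP.1; omega

def SG (n : ℕ) (j w : ℕ) : (G12 n).Subgraph where
  verts := {x | Tmem j w x ∨ Pmem j w x}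
  Adj x y := (Tmem j w x ∧ Pmem j w y) ∨ (Tmem j w y ∧ Pmem j w x)
  adj_sub := by
    rintro x y (⟨hT, hP⟩ | ⟨hT, hP⟩)
    · left
      refine ⟨hT.1, hP.1, fun hsub => ?_⟩
      obtain ⟨a, ha⟩ := Finset.card_eq_one.mp hT.1
      have hax : a ∈ x.1 := by simp [ha]
      have := hT.2 a hax
      have := hP.2.1 a (hsub hax)
      omega
    · right
      refine ⟨hT.1, hP.1, fun hsub => ?_⟩
      obtain ⟨a, ha⟩ := Finset.card_eq_one.mp hT.1
      have hax : a ∈ y.1 := by simp [ha]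
      have := hT.2 a hax
      have := hP.2.1 a (hsub hax)
      omega
  edge_vert := by rintro x y (⟨hT, hP⟩ | ⟨hT, hP⟩) <;> [exact Or.inl hT; exact Or.inr hP]
  symm := by constructor; rintro x y (h | h) <;> [exact Or.inr h; exact Or.inl h]

lemma SG_isCompleteBipartite (n j w : ℕ) :
    (∃ A B : Set ↥(SG n j w).verts, Disjoint A B ∧ A ∪ B = Set.univ ∧
      ∀ u v, (SG n j w).coe.Adj u v ↔ ((u ∈ A ∧ v ∈ B) ∨ (u ∈ B ∧ v ∈ A))) := by
  refine ⟨{v | Tmem j w v.1}, {v | Pmem j w v.1}, ?_, ?_, ?_⟩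
  · rw [Set.disjoint_left]
    rintro v hT hP
    exact not_T_and_P hT hP
  · ext v
    simp only [Set.mem_union, Set.mem_setOf_eq, Set.mem_univ, iff_true]
    exact v.2
  · intro u v
    simp only [SimpleGraph.Subgraph.coe_adj, Set.mem_setOf_eq]
    show (Tmem j w u.1 ∧ Pmem j w v.1) ∨ (Tmem j w v.1 ∧ Pmem j w u.1) ↔ _
    tauto

end UB

namespace UB

noncomputable def CC (n : ℕ) : Finset ((G12 n).Subgraph) :=
  ((Finset.range (Nat.clog 2 n)) ×ˢ (Finset.range (2 * n))).image
    (fun q => SG n q.1 q.2)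

lemma div_pow_succ (x j : ℕ) : x / 2 ^ (j + 1) = x / 2 ^ j / 2 := by
  rw [pow_succ, Nat.div_div_eq_div_mul]

/-- Edge covering, one orientation. -/
lemma edge_cover {n : ℕ} (hn : 2 ≤ n) {x y : P12 n}
    (hx : x.1.card = 1) (hy : y.1.card = 2) (hsub : ¬x.1 ⊆ y.1) :
    ∃ j w, j < Nat.clog 2 n ∧ w < 2 * n ∧ Tmem j w x ∧ Pmem j w y := by
  set L := Nat.clog 2 n with hL
  obtain ⟨a, ha⟩ := Finset.card_eq_one.mp hx
  obtain ⟨b, c, hbc, hy2⟩ := Finset.card_eq_two.mp hy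
  have hab : a ∉ y.1 := by
    intro h; exact hsub (by simp [ha, h])
  have hanb : a.val ≠ b.val := by
    intro h; apply hab; rw [hy2]; simp [Fin.ext h]
  have hanc : a.val ≠ c.val := by
    intro h; apply hab; rw [hy2]; simp [Fin.ext h]
  set D : Finset ℕ := (Finset.range L).filter
    (fun j => a.val / 2 ^ j ≠ b.val / 2 ^ j ∧ a.val / 2 ^ j ≠ c.val / 2 ^ j) with hD
  have h0D : 0 ∈ D := by
    simp only [hD, Finset.mem_filter, Finset.mem_range]
    refine ⟨Nat.clog_pos one_lt_two hn, by simpa using hanb, by simpa using hanc⟩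
  have hDne : D.Nonempty := ⟨0, h0D⟩
  set j := D.max' hDne with hj
  have hjD : j ∈ D := D.max'_mem hDne
  simp only [hD, Finset.mem_filter, Finset.mem_range] at hjD
  obtain ⟨hjL, hjb, hjc⟩ := hjD
  refine ⟨j, a.val / 2 ^ j, hjL, lt_of_le_of_lt (Nat.div_le_self _ _) (by omega), ?_, ?_⟩
  · exact ⟨hx, by intro z hz; rw [ha] at hz; simp at hz; subst hz; rfl⟩
  · refine ⟨hy, ?_, ?_⟩
    · intro z hz
      rw [hy2] at hz; simp at hz
      rcases hz with rfl | rfl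
      · omega
      · omega
    · -- find an element of y whose node at level j has the same parent
      have key : a.val / 2 ^ (j+1) = b.val / 2 ^ (j+1) ∨ a.val / 2 ^ (j+1) = c.val / 2 ^ (j+1) := by
        by_cases hjL' : j + 1 < L
        · by_contra hcon
          push_neg at hcon
          have : j + 1 ∈ D := by
            simp only [hD, Finset.mem_filter, Finset.mem_range]
            exact ⟨hjL', hcon.1, hcon.2⟩
          have := D.le_max' _ this
          omega
        · left
          have hna : a.val < 2 ^ (j+1) := by
            calc a.val < n := a.isLt
            _ ≤ 2 ^ L := Nat.le_pow_clog one_lt_two n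
            _ ≤ 2 ^ (j+1) := Nat.pow_le_pow_right (by norm_num) (by omega)
          have hnb : b.val < 2 ^ (j+1) := by
            calc b.val < n := b.isLt
            _ ≤ 2 ^ L := Nat.le_pow_clog one_lt_two n
            _ ≤ 2 ^ (j+1) := Nat.pow_le_pow_right (by norm_num) (by omega)
          rw [Nat.div_eq_of_lt hna, Nat.div_eq_of_lt hnb]
      rcases key with h | h
      · exact ⟨b, by simp [hy2], by rw [← div_pow_succ, ← div_pow_succ, ← h]⟩
      · exact ⟨c, by simp [hy2], by rw [← div_pow_succ, ← div_pow_succ, ← h]⟩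

def sibN (u : ℕ) : ℕ := 2 * (u / 2) + 1 - u % 2

lemma sib_spec {u w : ℕ} (hne : w ≠ u) (hpar : w / 2 = u / 2) : w = sibN u := by
  simp only [sibN]; omega

/-- Vertex covering. -/
lemma vert_cover {n : ℕ} (hn : 3 ≤ n) (x : P12 n) :
    ∃ j w, j < Nat.clog 2 n ∧ w < 2 * n ∧ (Tmem j w x ∨ Pmem j w x) := by
  have hL1 : 0 < Nat.clog 2 n := Nat.clog_pos one_lt_two (by omega)
  rcases x.2 with hx | hx
  · obtain ⟨a, ha⟩ := Finset.card_eq_one.mp hx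
    refine ⟨0, a.val, hL1, by have := a.isLt; omega, Or.inl ⟨hx, ?_⟩⟩
    intro z hz; rw [ha] at hz; simp at hz; subst hz; simp
  · obtain ⟨b, c, hbc, hy2⟩ := Finset.card_eq_two.mp hx
    have hbv := b.isLt
    have hcv := c.isLt
    have hbcv : b.val ≠ c.val := fun h => hbc (Fin.ext h)
    have hmem : ∀ z : Fin n, z ∈ x.1 → z.val = b.val ∨ z.val = c.val := by
      intro z hz; rw [hy2] at hz; simp at hz
      rcases hz with rfl | rfl <;> simp
    by_cases hcs : c.val = sibN b.val
    · -- siblings at level 0; use level 1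
      simp only [sibN] at hcs
      have hL2 : 1 < Nat.clog 2 n := by
        rw [Nat.lt_clog_iff_pow_lt one_lt_two]; omega
      refine ⟨1, sibN (b.val / 2), hL2, by simp only [sibN]; omega,
        Or.inr ⟨hx, ?_, ?_⟩⟩
      · intro z hz
        rcases hmem z hz with h | h <;>
          · simp only [pow_one, sibN]; omega
      · refine ⟨b, by simp [hy2], ?_⟩
        simp only [pow_one, sibN]; omega
    · simp only [sibN] at hcs
      refine ⟨0, sibN b.val, hL1, by simp only [sibN]; omega,
        Or.inr ⟨hx, ?_, ?_⟩⟩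
      · intro z hz
        rcases hmem z hz with h | h <;>
          · simp only [pow_zero, Nat.div_one, sibN]; omega
      · refine ⟨b, by simp [hy2], ?_⟩
        simp only [pow_zero, Nat.div_one, sibN]; omega

end UB

namespace UB

lemma sup_adj_iff {V : Type*} {H : SimpleGraph V} (s : Finset H.Subgraph) (x y : V) :
    (s.sup id).Adj x y ↔ ∃ G ∈ s, G.Adj x y := by
  classical
  induction s using Finset.induction_on with
  | empty => simp [SimpleGraph.Subgraph.not_bot_adj]
  | @insert a s' ha ih => simp [Finset.sup_insert, SimpleGraph.Subgraph.sup_adj, ih]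

lemma sup_verts_iff {V : Type*} {H : SimpleGraph V} (s : Finset H.Subgraph) (x : V) :
    x ∈ (s.sup id).verts ↔ ∃ G ∈ s, x ∈ G.verts := by
  classical
  induction s using Finset.induction_on with
  | empty => simp [SimpleGraph.Subgraph.verts_bot]
  | @insert a s' ha ih => simp [Finset.sup_insert, SimpleGraph.Subgraph.verts_sup, ih]

lemma CC_sup (n : ℕ) (hn : 3 ≤ n) : (CC n).sup id = ⊤ := by
  apply le_antisymm le_top
  constructor
  · intro x _
    obtain ⟨j, w, hj, hw, hv⟩ := vert_cover hn x
    rw [sup_verts_iff]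
    exact ⟨SG n j w, Finset.mem_image.mpr ⟨⟨j, w⟩, by simp [hj, hw], rfl⟩, hv⟩
  · intro x y hxy
    rw [SimpleGraph.Subgraph.top_adj] at hxy
    rw [sup_adj_iff]
    rcases hxy with ⟨h1, h2, h3⟩ | ⟨h1, h2, h3⟩
    · obtain ⟨j, w, hj, hw, hT, hP⟩ := edge_cover (by omega) h1 h2 h3
      exact ⟨SG n j w, Finset.mem_image.mpr ⟨⟨j, w⟩, by simp [hj, hw], rfl⟩,
        Or.inl ⟨hT, hP⟩⟩
    · obtain ⟨j, w, hj, hw, hT, hP⟩ := edge_cover (by omega) h1 h2 h3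
      exact ⟨SG n j w, Finset.mem_image.mpr ⟨⟨j, w⟩, by simp [hj, hw], rfl⟩,
        Or.inr ⟨hT, hP⟩⟩

lemma CC_local (n : ℕ) (v : P12 n) :
    ((CC n).filter fun G => v ∈ G.verts).card ≤ 2 * Nat.clog 2 n := by
  classical
  set L := Nat.clog 2 n with hL
  set I := (Finset.range L) ×ˢ (Finset.range (2 * n)) with hI
  have himg : ((CC n).filter fun G => v ∈ G.verts) =
      (I.filter fun q => v ∈ (SG n q.1 q.2).verts).image (fun q => SG n q.1 q.2) := by
    rw [CC, Finset.filter_image]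
  rw [himg]
  refine le_trans (Finset.card_image_le) ?_
  have hverts : ∀ j w, v ∈ (SG n j w).verts ↔ (Tmem j w v ∨ Pmem j w v) := fun _ _ => Iff.rfl
  rcases v.2 with hv | hv
  · obtain ⟨a, ha⟩ := Finset.card_eq_one.mp hv
    -- w is determined by j
    calc (I.filter fun q => v ∈ (SG n q.1 q.2).verts).card
        ≤ (Finset.range L).card := by
          apply Finset.card_le_card_of_injOn Prod.fst
          · rintro ⟨j, w⟩ hq
            change (j, w) ∈ (I.filter fun q => v ∈ (SG n q.1 q.2).verts) at hq
            simp only [Finset.mem_filter, hI, Finset.mem_product, Finset.mem_range] at hq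
            simp only [Finset.coe_range, Set.mem_Iio]
            exact hq.1.1
          · rintro ⟨j, w⟩ hq ⟨j', w'⟩ hq' (h : j = j')
            subst h
            simp only [Finset.coe_filter, Set.mem_setOf_eq, hverts] at hq hq'
            have hw : ∀ u, (Tmem j u v ∨ Pmem j u v) → u = a.val / 2 ^ j := by
              rintro u (⟨_, h2⟩ | ⟨h1, _⟩)
              · exact (h2 a (by simp [ha])).symm
              · rw [ha] at h1; simp at h1
            rw [Prod.mk.injEq]
            exact ⟨rfl, (hw _ hq.2).trans (hw _ hq'.2).symm⟩
      _ ≤ 2 * L := by simp; omega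
  · obtain ⟨b, c, hbc, hy2⟩ := Finset.card_eq_two.mp hv
    calc (I.filter fun q => v ∈ (SG n q.1 q.2).verts).card
        ≤ ((Finset.range L) ×ˢ (Finset.univ : Finset Bool)).card := by
          apply Finset.card_le_card_of_injOn
            (fun q => (q.1, decide (q.2 = sibN (b.val / 2 ^ q.1))))
          · rintro ⟨j, w⟩ hq
            change (j, w) ∈ (I.filter fun q => v ∈ (SG n q.1 q.2).verts) at hq
            show (j, decide (w = sibN (b.val / 2 ^ j))) ∈ ((Finset.range L) ×ˢ (Finset.univ : Finset Bool))
            simp only [Finset.mem_filter, hI, Finset.mem_product, Finset.mem_range] at hq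
            simp only [Finset.mem_product, Finset.mem_range]
            exact ⟨hq.1.1, Finset.mem_univ _⟩
          · rintro ⟨j, w⟩ hq ⟨j', w'⟩ hq' heq
            simp only [Prod.mk.injEq] at heq ⊢
            obtain ⟨rfl, h2⟩ := heq
            refine ⟨rfl, ?_⟩
            simp only [Finset.coe_filter, Set.mem_setOf_eq, hverts] at hq hq'
            have hw : ∀ u, (Tmem j u v ∨ Pmem j u v) →
                u = sibN (b.val / 2 ^ j) ∨ u = sibN (c.val / 2 ^ j) := by
              rintro u (⟨h1, _⟩ | ⟨h1, hne, z, hz, hpar⟩)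
              · rw [hy2, Finset.card_insert_of_notMem (by simp [hbc])] at h1
                simp at h1
              · have hzu : z.val / 2 ^ j ≠ u := hne z hz
                have : u = sibN (z.val / 2 ^ j) := by
                  simp only [sibN]; omega
                rw [hy2] at hz; simp at hz
                rcases hz with rfl | rfl
                · exact Or.inl this
                · exact Or.inr this
            have h1 := hw _ hq.2
            have h2' := hw _ hq'.2
            by_cases hb : w = sibN (b.val / 2 ^ j)
            · simp [hb] at h2
              omega
            · simp [hb] at h2
              rcases h1 with h1 | h1
              · exact absurd h1 hb
              rcases h2' with h3 | h3
              · exact absurd h3 (by simpa using h2)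
              omega
      _ ≤ 2 * L := by simp [Finset.card_univ, mul_comm]

end UB


namespace LB

variable {n : ℕ}

/-- the singleton vertex {2j+1} -/
def sv (j : Fin (n / 2)) : P12 n :=
  ⟨{⟨2 * j.val + 1, by have := j.isLt; have := Nat.div_mul_le_self n 2; omega⟩},
    Or.inl (Finset.card_singleton _)⟩

/-- the pair vertex {2j, 2j+1} -/
def pvt (j : Fin (n / 2)) : P12 n :=
  ⟨{⟨2 * j.val, by have := j.isLt; have := Nat.div_mul_le_self n 2; omega⟩,
    ⟨2 * j.val + 1, by have := j.isLt; have := Nat.div_mul_le_self n 2; omega⟩},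
    Or.inr (Finset.card_pair (by intro h; simpa using congrArg Fin.val h))⟩

lemma sv_pvt_not_adj (j : Fin (n / 2)) : ¬ (G12 n).Adj (sv j) (pvt j) := by
  rintro (⟨h1, h2, h3⟩ | ⟨h1, h2, h3⟩)
  · exact h3 (by simp [sv, pvt])
  · simp [sv, pvt] at h1 h2

lemma sv_pvt_adj {j l : Fin (n / 2)} (hjl : j ≠ l) : (G12 n).Adj (sv j) (pvt l) := by
  left
  refine ⟨Finset.card_singleton _, (pvt l).2.elim (by simp [pvt]) id, ?_⟩
  intro hsub
  have := hsub (Finset.mem_singleton_self _)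
  simp only [pvt, Finset.mem_insert, Finset.mem_singleton] at this
  rcases this with h | h <;>
  · have := congrArg Fin.val h
    simp at this
    omega
  
end LB

namespace LB

noncomputable def partA {W : Type*} (G : SimpleGraph W) : Set W :=
  if h : IsCompleteBipartite G then h.choose else ∅

lemma partA_spec {W : Type*} {G : SimpleGraph W} (h : IsCompleteBipartite G) :
    ∃ B, Disjoint (partA G) B ∧ partA G ∪ B = Set.univ ∧
      ∀ u v, G.Adj u v ↔ ((u ∈ partA G ∧ v ∈ B) ∨ (u ∈ B ∧ v ∈ partA G)) := by
  rw [partA, dif_pos h]; exact h.choose_spec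

lemma partA_same_side {W : Type*} {G : SimpleGraph W} (h : IsCompleteBipartite G)
    {u v : W} (hne : ¬ G.Adj u v) : (u ∈ partA G ↔ v ∈ partA G) := by
  obtain ⟨B, hdisj, huniv, hadj⟩ := partA_spec h
  have hu : u ∈ partA G ∪ B := huniv ▸ Set.mem_univ u
  have hv : v ∈ partA G ∪ B := huniv ▸ Set.mem_univ v
  rw [Set.disjoint_left] at hdisj
  have := hadj u v
  rcases hu with hu | hu <;> rcases hv with hv | hv <;>
    tauto

lemma partA_cross {W : Type*} {G : SimpleGraph W} (h : IsCompleteBipartite G)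
    {u v : W} (hadj : G.Adj u v) : ¬ (u ∈ partA G ↔ v ∈ partA G) := by
  obtain ⟨B, hdisj, huniv, hadjiff⟩ := partA_spec h
  rw [Set.disjoint_left] at hdisj
  rcases (hadjiff u v).mp hadj with ⟨h1, h2⟩ | ⟨h1, h2⟩ <;>
    · intro hiff; tauto

lemma sup_adj_iff' {V : Type*} {H : SimpleGraph V} (s : Finset H.Subgraph) (x y : V) :
    (s.sup id).Adj x y ↔ ∃ G ∈ s, G.Adj x y := by
  classical
  induction s using Finset.induction_on with
  | empty => simp [SimpleGraph.Subgraph.not_bot_adj]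
  | @insert a s' ha ih => simp [Finset.sup_insert, SimpleGraph.Subgraph.sup_adj, ih]

section Core

variable (n : ℕ) (C : Finset (G12 n).Subgraph)

noncomputable def fS (j : Fin (n / 2)) (G : (G12 n).Subgraph) : Prop :=
  if h : sv j ∈ G.verts then ((⟨sv j, h⟩ : G.verts) ∈ partA G.coe)
  else ∃ h2 : pvt j ∈ G.verts, (⟨pvt j, h2⟩ : G.verts) ∈ partA G.coe

noncomputable def Dj (j : Fin (n / 2)) : Finset (G12 n).Subgraph :=
  C.filter (fun G => sv j ∈ G.verts ∨ pvt j ∈ G.verts)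

noncomputable def S0 (j : Fin (n / 2)) : Finset (G12 n).Subgraph :=
  (Dj n C j).filter (fS n j)

noncomputable def Surv (j : Fin (n / 2)) : Finset (Finset (G12 n).Subgraph) :=
  ((C \ Dj n C j).powerset).image (· ∪ S0 n C j)

variable {n C}

lemma surv_spec (hP : ∀ G ∈ C, IsCompleteBipartite G.coe) {j : Fin (n / 2)}
    {S : Finset (G12 n).Subgraph} (hS : S ∈ Surv n C j) : ∀ G ∈ C,
    (∀ h : sv j ∈ G.verts, ((⟨sv j, h⟩ : G.verts) ∈ partA G.coe ↔ G ∈ S)) ∧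
    (∀ h : pvt j ∈ G.verts, ((⟨pvt j, h⟩ : G.verts) ∈ partA G.coe ↔ G ∈ S)) := by
  obtain ⟨T, hT, rfl⟩ := Finset.mem_image.mp hS
  rw [Finset.mem_powerset] at hT
  intro G hG
  have hmem : ∀ h : (sv j ∈ G.verts ∨ pvt j ∈ G.verts),
      (G ∈ T ∪ S0 n C j ↔ fS n j G) := by
    intro h
    have hD : G ∈ Dj n C j := Finset.mem_filter.mpr ⟨hG, h⟩
    have hnT : G ∉ T := fun hGT => (Finset.mem_sdiff.mp (hT hGT)).2 hD
    simp only [Finset.mem_union, S0, Finset.mem_filter]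
    tauto
  constructor
  · intro h
    rw [hmem (Or.inl h)]
    rw [fS, dif_pos h]
  · intro h2
    rw [hmem (Or.inr h2)]
    rw [fS]
    by_cases h1 : sv j ∈ G.verts
    · rw [dif_pos h1]
      apply partA_same_side (hP G hG)
      intro hadj
      exact sv_pvt_not_adj j (G.adj_sub hadj.symm)
    · rw [dif_neg h1]
      exact ⟨fun hm => ⟨h2, hm⟩, fun ⟨h2', hm⟩ => hm⟩

lemma surv_card {j : Fin (n / 2)} (hDk : (Dj n C j).card ≤ 2 * k) :
    2 ^ (C.card - 2 * k) ≤ (Surv n C j).card := by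
  have hrec : ∀ T ∈ (C \ Dj n C j).powerset, (T ∪ S0 n C j) \ Dj n C j = T := by
    intro T hT
    rw [Finset.mem_powerset] at hT
    ext G
    simp only [Finset.mem_sdiff, Finset.mem_union, S0, Finset.mem_filter]
    constructor
    · rintro ⟨hGT | ⟨hGD, _⟩, hnD⟩
      · exact hGT
      · exact absurd hGD hnD
    · intro hGT
      exact ⟨Or.inl hGT, (Finset.mem_sdiff.mp (hT hGT)).2⟩
  have hinj : Set.InjOn (· ∪ S0 n C j) ((C \ Dj n C j).powerset : Set _) := by
    intro T hT T' hT' heq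
    change T ∪ S0 n C j = T' ∪ S0 n C j at heq
    rw [← hrec T hT, ← hrec T' hT', heq]
  have hDsub : Dj n C j ⊆ C := by rw [Dj]; exact Finset.filter_subset _ _
  rw [Surv, Finset.card_image_of_injOn hinj, Finset.card_powerset,
    Finset.card_sdiff_of_subset hDsub]
  exact Nat.pow_le_pow_right (by norm_num) (by omega)

lemma surv_disj (hP : ∀ G ∈ C, IsCompleteBipartite G.coe) (hsup : C.sup id = ⊤)
    {j l : Fin (n / 2)} (hjl : j ≠ l) : Disjoint (Surv n C j) (Surv n C l) := by
  rw [Finset.disjoint_left]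
  intro S hSj hSl
  have hadj : (G12 n).Adj (sv j) (pvt l) := sv_pvt_adj hjl
  have : ((C.sup id).Adj (sv j) (pvt l)) := by rw [hsup]; exact hadj
  obtain ⟨G, hG, hGadj⟩ := (sup_adj_iff' C _ _).mp this
  have h1 : sv j ∈ G.verts := G.edge_vert hGadj
  have h2 : pvt l ∈ G.verts := G.edge_vert hGadj.symm
  have hcadj : G.coe.Adj ⟨sv j, h1⟩ ⟨pvt l, h2⟩ := hGadj
  have hcross := partA_cross (hP G hG) hcadj
  have hj := ((surv_spec hP hSj G hG).1 h1)
  have hl := ((surv_spec hP hSl G hG).2 h2)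
  exact hcross (hj.trans hl.symm)

lemma lower_core (k : ℕ) (hP : ∀ G ∈ C, IsCompleteBipartite G.coe)
    (hsup : C.sup id = ⊤)
    (hloc : ∀ v : P12 n, (C.filter fun G => v ∈ G.verts).card ≤ k) :
    n / 2 ≤ 2 ^ (2 * k) := by
  have hDk : ∀ j : Fin (n / 2), (Dj n C j).card ≤ 2 * k := by
    intro j
    rw [Dj, Finset.filter_or]
    calc (C.filter (fun G => sv j ∈ G.verts) ∪ C.filter (fun G => pvt j ∈ G.verts)).card
        ≤ _ + _ := Finset.card_union_le _ _
      _ ≤ k + k := Nat.add_le_add (hloc _) (hloc _)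
      _ = 2 * k := by ring
  have hsum : (n / 2) * 2 ^ (C.card - 2 * k) ≤ 2 ^ C.card := by
    have hbi : ((Finset.univ : Finset (Fin (n / 2))).biUnion (Surv n C)).card
        = ∑ j, (Surv n C j).card :=
      Finset.card_biUnion (fun j _ l _ hjl => surv_disj hP hsup hjl)
    have hsub : (Finset.univ : Finset (Fin (n / 2))).biUnion (Surv n C) ⊆ C.powerset := by
      intro S hS
      simp only [Finset.mem_biUnion] at hS
      obtain ⟨j, _, hSj⟩ := hS
      obtain ⟨T, hT, rfl⟩ := Finset.mem_image.mp hSj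
      rw [Finset.mem_powerset] at hT ⊢
      exact Finset.union_subset ((hT.trans (Finset.sdiff_subset)))
        ((Finset.filter_subset _ _).trans (Finset.filter_subset _ _))
    calc (n / 2) * 2 ^ (C.card - 2 * k)
        = ∑ _j : Fin (n / 2), 2 ^ (C.card - 2 * k) := by
          simp [Finset.sum_const, Finset.card_univ, mul_comm]
      _ ≤ ∑ j, (Surv n C j).card := Finset.sum_le_sum (fun j _ => surv_card (hDk j))
      _ = _ := hbi.symm
      _ ≤ C.powerset.card := Finset.card_le_card hsub
      _ = 2 ^ C.card := Finset.card_powerset C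
  rcases le_or_gt C.card (2 * k) with h | h
  · have : C.card - 2 * k = 0 := by omega
    rw [this, pow_zero, mul_one] at hsum
    exact hsum.trans (Nat.pow_le_pow_right (by norm_num) h)
  · have hX : 2 ^ C.card = 2 ^ (2 * k) * 2 ^ (C.card - 2 * k) := by
      rw [← pow_add]; congr 1; omega
    rw [hX] at hsum
    exact Nat.le_of_mul_le_mul_right hsum (by positivity)

end Core

end LB


-- ==== gluing the two parts together ====

section Glue

/-- The defining set of the local complete-bipartite cover number of `G12 n`. -/
def CBset (n : ℕ) : Set ℕ := {k | ∃ C : Finset (G12 n).Subgraph,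
  (∀ G ∈ C, IsCompleteBipartite G.coe) ∧ C.sup id = ⊤ ∧
  ∀ v : P12 n, (C.filter fun G => v ∈ G.verts).card ≤ k}

lemma cbCN_eq (n : ℕ) : cbCN (G12 n) = sInf (CBset n) := by
  rw [cbCN, localCoverNumber, CBset]

lemma CBset_mem (n : ℕ) (hn : 3 ≤ n) : 2 * Nat.clog 2 n ∈ CBset n := by
  refine ⟨UB.CC n, ?_, UB.CC_sup n hn, fun v => UB.CC_local n v⟩
  intro G hG
  obtain ⟨⟨j, w⟩, _, rfl⟩ := Finset.mem_image.mp hG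
  exact UB.SG_isCompleteBipartite n j w

lemma cb_le (n : ℕ) (hn : 3 ≤ n) : cbCN (G12 n) ≤ 2 * Nat.clog 2 n := by
  rw [cbCN_eq]; exact Nat.sInf_le (CBset_mem n hn)

lemma cb_lower (n : ℕ) (hn : 3 ≤ n) : n / 2 ≤ 2 ^ (2 * cbCN (G12 n)) := by
  have hne : (CBset n).Nonempty := ⟨_, CBset_mem n hn⟩
  have hmem : cbCN (G12 n) ∈ CBset n := by rw [cbCN_eq]; exact Nat.sInf_mem hne
  obtain ⟨C, hP, hsup, hloc⟩ := hmem
  exact LB.lower_core _ hP hsup hloc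

lemma log_two_pos : (0:ℝ) < Real.log 2 := Real.log_pos one_lt_two

/-- upper bound in terms of `Real.log`. -/
lemma cb_upper_log (n : ℕ) (hn : 16 ≤ n) :
    (cbCN (G12 n) : ℝ) ≤ 4 * Real.log n := by
  have h3 : 3 ≤ n := by omega
  have hK := cb_le n h3
  set L := Nat.clog 2 n with hL
  have hL1 : 1 ≤ L := Nat.clog_pos one_lt_two (by omega)
  -- 2 ^ (L-1) < n
  have hpow : (2:ℕ) ^ (L - 1) < n := by
    have := Nat.pow_pred_clog_lt_self one_lt_two (x := n) (by omega)
    simpa [Nat.pred_eq_sub_one] using this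
  have hpowR : (2:ℝ) ^ (L - 1) ≤ (n:ℝ) := by
    exact_mod_cast hpow.le
  have hlogpow : ((L:ℝ) - 1) * Real.log 2 ≤ Real.log n := by
    have h := Real.log_le_log (by positivity) hpowR
    rw [Real.log_pow] at h
    have hcast : ((L - 1 : ℕ) : ℝ) = (L:ℝ) - 1 := by
      have : (1:ℕ) ≤ L := hL1
      push_cast [Nat.cast_sub this]
      ring
    rwa [hcast] at h
  have hlog2 : (0.6931471803 : ℝ) < Real.log 2 := Real.log_two_gt_d9
  have hlogn16 : (2:ℝ) ≤ Real.log n := by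
    have h16 : Real.log 16 ≤ Real.log n := by
      apply Real.log_le_log (by norm_num)
      exact_mod_cast hn
    have : Real.log 16 = 4 * Real.log 2 := by
      rw [show (16:ℝ) = 2 ^ 4 by norm_num, Real.log_pow]
      push_cast; ring
    linarith
  have hKL : (cbCN (G12 n) : ℝ) ≤ 2 * (L:ℝ) := by exact_mod_cast hK
  have hlog2' : Real.log 2 < 0.6931471808 := Real.log_two_lt_d9
  have e1 : (L:ℝ) * Real.log 2 ≤ Real.log n + Real.log 2 := by nlinarith [log_two_pos]
  have e2 : Real.log n + Real.log 2 ≤ 2 * Real.log n * Real.log 2 := by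
    nlinarith [mul_nonneg (by linarith : (0:ℝ) ≤ Real.log n - 2)
      (by linarith : (0:ℝ) ≤ 2 * Real.log 2 - 1)]
  have e3 : (L:ℝ) ≤ 2 * Real.log n := by
    have := e1.trans e2
    exact le_of_mul_le_mul_right (by linarith) log_two_pos
  linarith

lemma logb_ge (n : ℕ) (hn : 16 ≤ n) :
    21 * Real.log n ≤ 3 * Real.logb (8/7) (n:ℝ) := by
  have hpos : (0:ℝ) < Real.log (8/7) := Real.log_pos (by norm_num)
  have hub : Real.log (8/7) ≤ 1/7 := by
    have := Real.log_le_sub_one_of_pos (x := (8/7:ℝ)) (by norm_num)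
    linarith
  have hlogn : (0:ℝ) ≤ Real.log n := Real.log_nonneg (by
    have : (1:ℕ) ≤ n := by omega
    exact_mod_cast this)
  rw [Real.logb]
  have h1 : Real.log n / (1/7) ≤ Real.log n / Real.log (8/7) :=
    div_le_div_of_nonneg_left hlogn hpos hub
  have h2 : Real.log n / (1/7) = 7 * Real.log n := by ring
  linarith
end Glue

open Real in
lemma upper_final : ∃ N : ℕ, ∀ n : ℕ, N ≤ n →
    (cbCN (G12 n) : ℝ) ≤ 3 * Real.logb (8 / 7) n := by
  refine ⟨16, fun n hn => ?_⟩
  have h1 := cb_upper_log n hn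
  have h2 := logb_ge n hn
  have hlogn : (0:ℝ) ≤ Real.log n := Real.log_nonneg (by
    have : (1:ℕ) ≤ n := by omega
    exact_mod_cast this)
  have : (4:ℝ) * Real.log n ≤ 21 * Real.log n := by nlinarith
  linarith

open Real in
lemma lower_final : ∃ c₁ c₂ : ℝ, 0 < c₁ ∧ 0 < c₂ ∧ ∃ N : ℕ, ∀ n : ℕ, N ≤ n →
    c₁ * Real.log n ≤ (cbCN (G12 n) : ℝ) ∧
    (cbCN (G12 n) : ℝ) ≤ c₂ * Real.log n := by
  refine ⟨1 / (4 * Real.log 2), 4, by positivity, by norm_num, 16, fun n hn => ?_⟩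
  constructor
  · -- lower bound
    set K := cbCN (G12 n) with hK
    have hq := cb_lower n (by omega)
    set q := n / 2 with hqdef
    have hq8 : 8 ≤ q := by omega
    have hnq : n ≤ q * q := by
      have h8q : 8 * q ≤ q * q := Nat.mul_le_mul_right q hq8
      omega
    have hq2 : q * q ≤ 2 ^ (2*K) * 2 ^ (2*K) := Nat.mul_le_mul hq hq
    have hn4 : n ≤ 2 ^ (4 * K) := by
      calc n ≤ q * q := hnq
        _ ≤ 2 ^ (2*K) * 2 ^ (2*K) := hq2
        _ = 2 ^ (4 * K) := by rw [← pow_add]; congr 1; ring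
    have hnR : (n:ℝ) ≤ (2:ℝ) ^ (4 * K) := by exact_mod_cast hn4
    have hlog : Real.log n ≤ (4 * K : ℕ) * Real.log 2 := by
      have := Real.log_le_log (by positivity : (0:ℝ) < (n:ℝ)) hnR
      rwa [Real.log_pow] at this
    have hl2 := log_two_pos
    rw [div_mul_eq_mul_div, div_le_iff₀ (by positivity)]
    push_cast at hlog ⊢
    nlinarith
  · exact cb_upper_log n hn

/-- **Theorem.** For all sufficiently large `n`,
`cn_ℓ(𝔅ℭ, G_{P(1,2;n)}) ≤ 3·log_{8/7} n`; consequently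
`cn_ℓ(𝔅ℭ, G_{P(1,2;n)}) = Θ(log n)` as `n → ∞`. -/
theorem cbCN_G12_upper_bound :
    (∃ N : ℕ, ∀ n : ℕ, N ≤ n →
      (cbCN (G12 n) : ℝ) ≤ 3 * Real.logb (8 / 7) n) ∧
    (∃ c₁ c₂ : ℝ, 0 < c₁ ∧ 0 < c₂ ∧ ∃ N : ℕ, ∀ n : ℕ, N ≤ n →
      c₁ * Real.log n ≤ (cbCN (G12 n) : ℝ) ∧
      (cbCN (G12 n) : ℝ) ≤ c₂ * Real.log n) := by
  exact ⟨upper_final, lower_final⟩
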